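/- Let C be an algebraically closed field of characteristic zero, let C(x) be its field of rational functions with the derivation ' determined by x' = 1 and c' = 0 for all c ∈ C, and let h, p ∈ C(x). Suppose e ∈ C is a pole of h of order T ≥ 1 (i.e., ord_e(h) = −T). Then either ord_e(h' + p·h) ≤ −(T + 1), or p has a pole of order exactly 1 at e whose residue at e equals the image of T in C. -/

import Mathlib

/-- `hasOrderAt e h n` means that the rational function `h` has `(x - e)`-adic
order exactly `n`, i.e. `h = (x - e)^n · u` where `u` has neither a zero nor a
pole at `e` (written as a quotient of polynomials not vanishing at `e`). -/
def hasOrderAt {C : Type*} [Field C] (e : C) (h : RatFunc C) (n : ℤ) : Prop :=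
  ∃ a b : Polynomial C, a.eval e ≠ 0 ∧ b.eval e ≠ 0 ∧
    h = (RatFunc.X - RatFunc.C e) ^ n *
      (algebraMap (Polynomial C) (RatFunc C) a / algebraMap (Polynomial C) (RatFunc C) b)

/-!
Write `h = (x - e)^(-T) u` with `u = a/b`, `a(e) b(e) ≠ 0`. The Leibniz rule gives
`h' + p h = h (r + u'/u)` with `r = p - T/(x - e)`, and `u'/u = (a'b - ab')/(ab)` is regular
at `e`. Either `r` is regular at `e`, or it has a pole of some order `m ≥ 1` there, which adding
the regular `u'/u` does not change, so that `h' + p h` has order `-T - m`.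
-/

open scoped Polynomial

def Derivation.ofLeibniz {R A : Type*} [CommRing R] [CommRing A] [Algebra R A] (δ : A → A)
    (hadd : ∀ f g, δ (f + g) = δ f + δ g) (hmul : ∀ f g, δ (f * g) = f * δ g + δ f * g)
    (halg : ∀ r, δ (algebraMap R A r) = 0) : Derivation R A A :=
  Derivation.mk'
    { toFun := δ
      map_add' := hadd
      map_smul' := fun r f => by simp [Algebra.smul_def, hmul, halg] }
    fun f g => by simp [hmul, mul_comm]

theorem Derivation.apply_zpow_mul_add_mul {R K : Type*} [CommRing R] [Field K] [Algebra R K]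
    (D : Derivation R K K) {z u : K} (hz : z ≠ 0) (hu : u ≠ 0) (hDz : D z = 1) (k : ℤ) (p : K) :
    D (z ^ k * u) + p * (z ^ k * u) = z ^ k * u * (p + k / z + D u / u) := by
  rw [D.leibniz, D.leibniz_zpow, hDz, zpow_sub_one₀ hz]
  simp only [smul_eq_mul, zsmul_eq_mul]
  field_simp
  ring

namespace RatFunc

variable {K : Type*} [Field K]

theorem X_sub_C_ne_zero (e : K) : (X - C e : RatFunc K) ≠ 0 := by
  rw [← algebraMap_X, ← algebraMap_C, ← map_sub]
  exact algebraMap_ne_zero (Polynomial.X_sub_C_ne_zero e)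

theorem algebraMap_ne_zero_of_eval_ne_zero {e : K} {b : K[X]} (hb : b.eval e ≠ 0) :
    algebraMap K[X] (RatFunc K) b ≠ 0 :=
  algebraMap_ne_zero fun h => hb (by simp [h])

theorem derivation_algebraMap (D : Derivation K (RatFunc K) (RatFunc K)) (hX : D X = 1)
    (q : K[X]) :
    D (algebraMap K[X] (RatFunc K) q) = algebraMap K[X] (RatFunc K) (Polynomial.derivative q) := by
  induction q using Polynomial.induction_on with
  | C c => simp [← algebraMap_eq_C]
  | add p q hp hq => simp [hp, hq]
  | monomial n c _ =>
    simp only [map_mul, map_pow, algebraMap_C, algebraMap_X, Polynomial.derivative_C_mul_X_pow,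
      ← algebraMap_eq_C, D.leibniz, D.leibniz_pow, D.map_algebraMap, hX, smul_eq_mul, nsmul_eq_mul]
    push_cast
    ring

def IsRegularAt (e : K) (g : RatFunc K) : Prop :=
  ∃ a b : K[X], b.eval e ≠ 0 ∧ g = algebraMap K[X] (RatFunc K) a / algebraMap K[X] (RatFunc K) b

theorem isRegularAt_zero (e : K) : IsRegularAt e (0 : RatFunc K) :=
  ⟨0, 1, by simp, by simp⟩

theorem isRegularAt_derivation_div_self (D : Derivation K (RatFunc K) (RatFunc K))
    (hX : D X = 1) {e : K} {a b : K[X]} (ha : a.eval e ≠ 0) (hb : b.eval e ≠ 0) :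
    IsRegularAt e (D (algebraMap K[X] (RatFunc K) a / algebraMap K[X] (RatFunc K) b) /
      (algebraMap K[X] (RatFunc K) a / algebraMap K[X] (RatFunc K) b)) := by
  have ha0 := algebraMap_ne_zero_of_eval_ne_zero ha
  have hb0 := algebraMap_ne_zero_of_eval_ne_zero hb
  refine ⟨Polynomial.derivative a * b - a * Polynomial.derivative b, a * b, by simp [ha, hb], ?_⟩
  rw [D.leibniz_div, derivation_algebraMap D hX, derivation_algebraMap D hX]
  simp only [smul_eq_mul, map_sub, map_mul]
  field_simp

end RatFunc

section Order

open RatFunc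

variable {K : Type*} [Field K] {e : K}

theorem hasOrderAt.mul {f g : RatFunc K} {m n : ℤ} (hf : hasOrderAt e f m)
    (hg : hasOrderAt e g n) : hasOrderAt e (f * g) (m + n) := by
  obtain ⟨a, b, ha, hb, rfl⟩ := hf
  obtain ⟨c, d, hc, hd, rfl⟩ := hg
  refine ⟨a * c, b * d, by simp [ha, hc], by simp [hb, hd], ?_⟩
  rw [zpow_add₀ (X_sub_C_ne_zero e), map_mul, map_mul]
  ring

theorem hasOrderAt.isRegularAt {f : RatFunc K} {n : ℤ} (hf : hasOrderAt e f n) (hn : 0 ≤ n) :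
    IsRegularAt e f := by
  obtain ⟨a, b, -, hb, rfl⟩ := hf
  lift n to ℕ using hn
  refine ⟨(Polynomial.X - Polynomial.C e) ^ n * a, b, hb, ?_⟩
  simp [mul_div_assoc]

theorem hasOrderAt.add_isRegularAt {f g : RatFunc K} {n : ℤ} (hf : hasOrderAt e f n)
    (hn : n < 0) (hg : IsRegularAt e g) : hasOrderAt e (f + g) n := by
  obtain ⟨a, b, ha, hb, rfl⟩ := hf
  obtain ⟨c, d, hd, rfl⟩ := hg
  obtain ⟨m, rfl⟩ : ∃ m : ℕ, n = -(m + 1 : ℕ) := ⟨(-n - 1).toNat, by omega⟩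
  refine ⟨a * d + (Polynomial.X - Polynomial.C e) ^ (m + 1) * b * c, b * d,
    by simp [ha, hd], by simp [hb, hd], ?_⟩
  have hb0 := algebraMap_ne_zero_of_eval_ne_zero hb
  have hd0 := algebraMap_ne_zero_of_eval_ne_zero hd
  have hZ := X_sub_C_ne_zero e
  simp only [map_add, map_mul, map_pow, map_sub, algebraMap_X, algebraMap_C, zpow_neg,
    zpow_natCast]
  field_simp

theorem exists_hasOrderAt (e : K) {r : RatFunc K} (hr : r ≠ 0) : ∃ n : ℤ, hasOrderAt e r n := by
  have hZ : (X - C e : RatFunc K) =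
      algebraMap K[X] (RatFunc K) (Polynomial.X - Polynomial.C e) := by
    simp
  refine ⟨Polynomial.rootMultiplicity e r.num - Polynomial.rootMultiplicity e r.denom,
    r.num /ₘ (Polynomial.X - Polynomial.C e) ^ Polynomial.rootMultiplicity e r.num,
    r.denom /ₘ (Polynomial.X - Polynomial.C e) ^ Polynomial.rootMultiplicity e r.denom,
    Polynomial.eval_divByMonic_pow_rootMultiplicity_ne_zero e (num_ne_zero hr),
    Polynomial.eval_divByMonic_pow_rootMultiplicity_ne_zero e r.denom_ne_zero, ?_⟩
  conv_lhs => rw [← num_div_denom r,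
    ← Polynomial.pow_mul_divByMonic_rootMultiplicity_eq r.num e,
    ← Polynomial.pow_mul_divByMonic_rootMultiplicity_eq r.denom e]
  rw [map_mul, map_mul, map_pow, map_pow, ← hZ, zpow_sub₀ (X_sub_C_ne_zero e), zpow_natCast,
    zpow_natCast, mul_div_mul_comm]

theorem hasOrderAt_derivation_add_mul (D : Derivation K (RatFunc K) (RatFunc K))
    (hX : D X = 1) {h p : RatFunc K} {k n : ℤ} (hh : hasOrderAt e h k)
    (hr : hasOrderAt e (p + (k : RatFunc K) / (X - C e)) n) (hn : n < 0) :
    hasOrderAt e (D h + p * h) (k + n) := by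
  have hDZ : D (X - C e) = 1 := by
    rw [map_sub, hX, ← algebraMap_eq_C, D.map_algebraMap, sub_zero]
  obtain ⟨a, b, ha, hb, rfl⟩ := id hh
  have hu := div_ne_zero (algebraMap_ne_zero_of_eval_ne_zero ha)
    (algebraMap_ne_zero_of_eval_ne_zero hb)
  rw [D.apply_zpow_mul_add_mul (X_sub_C_ne_zero e) hu hDZ]
  exact hh.mul (hr.add_isRegularAt hn (isRegularAt_derivation_div_self D hX ha hb))

end Order

theorem pole_order_bound_or_simple_pole_residue_general
    (C : Type*) [Field C]
    (δ : RatFunc C → RatFunc C)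
    (hadd : ∀ f g : RatFunc C, δ (f + g) = δ f + δ g)
    (hmul : ∀ f g : RatFunc C, δ (f * g) = f * δ g + δ f * g)
    (hX : δ RatFunc.X = 1)
    (hC : ∀ c : C, δ (RatFunc.C c) = 0)
    (h p : RatFunc C) (e : C)
    (T : ℤ)
    (hpole : hasOrderAt e h (-T)) :
    (∃ n : ℤ, n ≤ -(T + 1) ∧ hasOrderAt e (δ h + p * h) n) ∨
      (∃ g : RatFunc C,
        (∃ a b : Polynomial C, b.eval e ≠ 0 ∧
          g = algebraMap (Polynomial C) (RatFunc C) a /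
              algebraMap (Polynomial C) (RatFunc C) b) ∧
        p = RatFunc.C ((T : C)) / (RatFunc.X - RatFunc.C e) + g) := by
  set r := p - RatFunc.C (T : C) / (RatFunc.X - RatFunc.C e)
  by_cases hr : RatFunc.IsRegularAt e r
  · exact Or.inr ⟨r, hr, by ring⟩
  have hr0 : r ≠ 0 := fun h0 => hr (h0 ▸ RatFunc.isRegularAt_zero e)
  obtain ⟨n, hn⟩ := exists_hasOrderAt e hr0
  have hn0 : n < 0 := not_le.mp fun h0 => hr (hn.isRegularAt h0)
  have hr_eq : r = p + ((-T : ℤ) : RatFunc C) / (RatFunc.X - RatFunc.C e) := by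
    simp [r, sub_eq_add_neg, neg_div]
  refine Or.inl ⟨-T + n, by omega, ?_⟩
  let D : Derivation C (RatFunc C) (RatFunc C) :=
    Derivation.ofLeibniz δ hadd hmul (by simpa [← RatFunc.algebraMap_eq_C] using hC)
  exact hasOrderAt_derivation_add_mul D hX hpole (hr_eq ▸ hn) hn0

/-- **From the proof of Proposition 3.8 of the paper (bounds `T_N` in Algorithm 2).**
Let `C` be an algebraically closed field of characteristic zero and `'` the derivation
on `C(x)` with `x' = 1`, `c' = 0` for `c ∈ C`.  If `e ∈ C` is a pole of `h` of order
`T ≥ 1`, then either `ord_e (h' + p·h) ≤ −(T+1)`, or `p` has a pole of order exactly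
`1` at `e` whose residue at `e` equals the image of `T` in `C`. -/
theorem pole_order_bound_or_simple_pole_residue
    (C : Type*) [Field C] [IsAlgClosed C] [CharZero C]
    (δ : RatFunc C → RatFunc C)
    (hadd : ∀ f g : RatFunc C, δ (f + g) = δ f + δ g)
    (hmul : ∀ f g : RatFunc C, δ (f * g) = f * δ g + δ f * g)
    (hX : δ RatFunc.X = 1)
    (hC : ∀ c : C, δ (RatFunc.C c) = 0)
    (h p : RatFunc C) (e : C)
    (T : ℤ) (hT : 1 ≤ T)
    (hpole : hasOrderAt e h (-T)) :
    (∃ n : ℤ, n ≤ -(T + 1) ∧ hasOrderAt e (δ h + p * h) n) ∨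
      (∃ g : RatFunc C,
        (∃ a b : Polynomial C, b.eval e ≠ 0 ∧
          g = algebraMap (Polynomial C) (RatFunc C) a /
              algebraMap (Polynomial C) (RatFunc C) b) ∧
        p = RatFunc.C ((T : C)) / (RatFunc.X - RatFunc.C e) + g) :=
  pole_order_bound_or_simple_pole_residue_general C δ hadd hmul hX hC h p e T hpole
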